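/- Let K(ξ) = exp(ξ²/(4ν)) with ν > 0. For u ∈ H¹(K) ∩ L^∞(ℝ), the cubic convection term satisfies |∫_ℝ u(ξ)³ K'(ξ) dξ| ≤ C ‖u'‖_{L²(K)} ‖u‖_{L²(K)} ‖u‖_{L^∞(ℝ)} for some constant C depending only on ν, where K'(ξ) = (ξ/(2ν)) K(ξ). -/

import Mathlib

/-!
Since `(u²K)' = 2 u u' K + u² K'` and `K'` has the sign of `ξ`, integrating this identity
over each half-line bounds `∫ u² |K'|` by `2 ∫ |u' u K|`: the boundary term at `0` has the
favourable sign, and the one at infinity can be made arbitrarily small because `u² K` is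
integrable. Cauchy–Schwarz in `L²(K)` bounds `∫ |u' u K|` by `‖u'‖ ‖u‖`, and `|u|³ ≤ m u²`
finishes the estimate, with `C = 2`.
-/

open MeasureTheory Real Set Filter

theorem integrable_mul_mul_and_integral_abs_le_sqrt_mul_sqrt {α : Type*} [MeasurableSpace α]
    {μ : Measure α} {f g K : α → ℝ} (hf : AEStronglyMeasurable f μ)
    (hg : AEStronglyMeasurable g μ) (hKm : AEStronglyMeasurable K μ) (hK : ∀ x, 0 ≤ K x)
    (hfK : Integrable (fun x => f x ^ 2 * K x) μ) (hgK : Integrable (fun x => g x ^ 2 * K x) μ) :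
    Integrable (fun x => f x * g x * K x) μ ∧
      ∫ x, |f x * g x * K x| ∂μ ≤
        √(∫ x, f x ^ 2 * K x ∂μ) * √(∫ x, g x ^ 2 * K x ∂μ) := by
  have hsq : ∀ (h : α → ℝ) x, (h x * √(K x)) ^ 2 = h x ^ 2 * K x := fun h x => by
    rw [mul_pow, sq_sqrt (hK x)]
  have hmemLp : ∀ h : α → ℝ, AEStronglyMeasurable h μ →
      Integrable (fun x => h x ^ 2 * K x) μ → MemLp (fun x => h x * √(K x)) 2 μ :=
    fun h hm hi => by
    refine (memLp_two_iff_integrable_sq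
      (hm.mul (continuous_sqrt.comp_aestronglyMeasurable hKm))).2 ?_
    simpa only [Pi.mul_apply, hsq] using hi
  have hprod : ∀ x, f x * g x * K x = (f x * √(K x)) * (g x * √(K x)) := fun x => by
    rw [mul_mul_mul_comm, mul_self_sqrt (hK x), mul_assoc]
  have hfL := hmemLp f hf hfK
  have hgL := hmemLp g hg hgK
  have H := integral_mul_norm_le_Lp_mul_Lq Real.HolderConjugate.two_two
    (ENNReal.ofReal_ofNat 2 ▸ hfL) (ENNReal.ofReal_ofNat 2 ▸ hgL)
  simp only [norm_eq_abs, ← abs_mul, ← hprod, rpow_two, sq_abs, hsq, ← sqrt_eq_rpow] at H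
  refine ⟨?_, H⟩
  simp only [hprod]
  exact hfL.integrable_mul hgL

theorem frequently_abs_lt_of_integrableOn_Ioi {F : ℝ → ℝ} {a ε : ℝ}
    (hF : IntegrableOn F (Ioi a)) (hε : 0 < ε) : ∃ᶠ x in atTop, |F x| < ε := by
  intro h
  obtain ⟨N, hN⟩ := eventually_atTop.1 (h.mono fun x hx => not_lt.1 hx)
  have hsub : Ioi (max N a) ⊆ {x | ε ≤ ‖F x‖} ∩ Ioi a := fun x hx =>
    ⟨hN x (le_of_max_le_left hx.le), (le_max_right N a).trans_lt hx⟩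
  have hfin := hF.measure_norm_ge_lt_top hε
  rw [Measure.restrict_apply' measurableSet_Ioi] at hfin
  exact ((measure_mono hsub).trans_lt hfin).ne (by rw [Real.volume_Ioi])

theorem integrableOn_Ioi_and_integral_le_of_intervalIntegral_le {f : ℝ → ℝ} {a C : ℝ}
    (hf : ContinuousOn f (Ici a)) (hf0 : ∀ x ∈ Ioi a, 0 ≤ f x)
    (hC : ∀ b, a ≤ b → ∫ x in a..b, f x ≤ C) :
    IntegrableOn f (Ioi a) ∧ ∫ x in Ioi a, f x ≤ C := by
  have hloc : ∀ b, IntegrableOn f (Ioc a b) := fun b =>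
    ((hf.mono Icc_subset_Ici_self).integrableOn_Icc).mono_set Ioc_subset_Icc_self
  have hnorm : ∀ b, a ≤ b → ∫ x in a..b, ‖f x‖ = ∫ x in a..b, f x := fun b hab => by
    rw [intervalIntegral.integral_of_le hab, intervalIntegral.integral_of_le hab]
    exact setIntegral_congr_fun measurableSet_Ioc fun x hx => Real.norm_of_nonneg (hf0 x hx.1)
  have hint : IntegrableOn f (Ioi a) :=
    integrableOn_Ioi_of_intervalIntegral_norm_bounded C a hloc tendsto_id
      ((eventually_ge_atTop a).mono fun b hab => (hnorm b hab).trans_le (hC b hab))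
  exact ⟨hint, le_of_tendsto (intervalIntegral_tendsto_integral_Ioi a hint tendsto_id)
    ((eventually_ge_atTop a).mono hC)⟩

theorem intervalIntegral_le_of_hasDerivAt_add {F w f : ℝ → ℝ} {a b : ℝ} (hab : a ≤ b)
    (hF : ∀ x ∈ Icc a b, HasDerivAt F (w x + f x) x) (hFa : 0 ≤ F a)
    (hw : IntegrableOn w (Ioi a)) (hf : IntervalIntegrable f volume a b) :
    ∫ x in a..b, f x ≤ |F b| + ∫ x in Ioi a, |w x| := by
  have hwi : IntervalIntegrable w volume a b :=
    (intervalIntegrable_iff_integrableOn_Ioc_of_le hab).2 (hw.mono_set Ioc_subset_Ioi_self)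
  have hftc := intervalIntegral.integral_eq_sub_of_hasDerivAt
    (fun x hx => hF x (uIcc_of_le hab ▸ hx)) (hwi.add hf)
  rw [intervalIntegral.integral_add hwi hf] at hftc
  have hw_le : -∫ x in a..b, w x ≤ ∫ x in Ioi a, |w x| :=
    calc -∫ x in a..b, w x ≤ ∫ x in a..b, |w x| :=
          (neg_le_abs _).trans (intervalIntegral.abs_integral_le_integral_abs hab)
      _ ≤ ∫ x in Ioi a, |w x| := by
          rw [intervalIntegral.integral_of_le hab]
          exact setIntegral_mono_set hw.abs (ae_of_all _ fun x => abs_nonneg _)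
            Ioc_subset_Ioi_self.eventuallyLE
  linarith [le_abs_self (F b)]

theorem integrableOn_Ioi_and_integral_le_integral_abs_of_hasDerivAt_add {F w f : ℝ → ℝ}
    {a : ℝ}    (hF : ∀ x ∈ Ici a, HasDerivAt F (w x + f x) x) (hFa : 0 ≤ F a)
    (hFi : IntegrableOn F (Ioi a)) (hw : IntegrableOn w (Ioi a))
    (hf : ContinuousOn f (Ici a)) (hf0 : ∀ x ∈ Ioi a, 0 ≤ f x) :
    IntegrableOn f (Ioi a) ∧ ∫ x in Ioi a, f x ≤ ∫ x in Ioi a, |w x| := by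
  have hfi : ∀ b, a ≤ b → IntervalIntegrable f volume a b := fun b hab =>
    (hf.mono (uIcc_of_le hab ▸ Icc_subset_Ici_self)).intervalIntegrable
  refine integrableOn_Ioi_and_integral_le_of_intervalIntegral_le hf hf0 fun b hab =>
    le_of_forall_pos_le_add fun ε hε => ?_
  obtain ⟨c, hFc, hbc⟩ :=
    ((frequently_abs_lt_of_integrableOn_Ioi hFi hε).and_eventually (eventually_ge_atTop b)).exists
  calc ∫ x in a..b, f x ≤ ∫ x in a..c, f x :=
        intervalIntegral.integral_mono_interval le_rfl hab hbc
          ((ae_restrict_iff' measurableSet_Ioc).2 (ae_of_all _ fun x hx => hf0 x hx.1))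
          (hfi c (hab.trans hbc))
    _ ≤ |F c| + ∫ x in Ioi a, |w x| :=
        intervalIntegral_le_of_hasDerivAt_add (hab.trans hbc)
          (fun x hx => hF x hx.1) hFa hw (hfi c (hab.trans hbc))
    _ ≤ (∫ x in Ioi a, |w x|) + ε := by linarith

theorem integrableOn_Iic_and_neg_integral_le_integral_abs_of_hasDerivAt_add {F w f : ℝ → ℝ}
    {a : ℝ}    (hF : ∀ x ∈ Iic a, HasDerivAt F (w x + f x) x) (hFa : 0 ≤ F a)
    (hFi : IntegrableOn F (Iic a)) (hw : IntegrableOn w (Iic a))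
    (hf : ContinuousOn f (Iic a)) (hf0 : ∀ x ∈ Iio a, f x ≤ 0) :
    IntegrableOn f (Iic a) ∧ -∫ x in Iic a, f x ≤ ∫ x in Iic a, |w x| := by
  rw [← neg_neg a] at hFi hw
  obtain ⟨hi, hle⟩ := integrableOn_Ioi_and_integral_le_integral_abs_of_hasDerivAt_add
    (F := fun x => F (-x)) (w := fun x => -w (-x)) (f := fun x => -f (-x)) (a := -a)
    (fun x hx => ((hF (-x) (mem_Iic.2 (neg_le.1 hx))).comp x (hasDerivAt_neg x)).congr_deriv
      (by ring))
    (by rwa [neg_neg])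
    (hFi.comp_neg_Ici.mono_set Ioi_subset_Ici_self)
    (hw.comp_neg_Ici.neg.mono_set Ioi_subset_Ici_self)
    (hf.comp continuous_neg.continuousOn fun _ hx => mem_Iic.2 (neg_le.1 hx)).neg
    (fun x hx => neg_nonneg.2 (hf0 (-x) (mem_Iio.2 (neg_lt.1 hx))))
  have hi' := (integrableOn_Ici_iff_integrableOn_Ioi (by finiteness) |>.2 hi).comp_neg_Iic.neg
  refine ⟨by simpa using hi', ?_⟩
  simpa [integral_neg, integral_comp_neg_Ioi (f := fun y => |w y|)] using hle

theorem integrable_and_integral_sq_mul_abs_deriv_le {K K' u : ℝ → ℝ}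
    (hK : ∀ x, HasDerivAt K (K' x) x) (hK' : Continuous K')
    (hK'_nonpos : ∀ x ≤ 0, K' x ≤ 0) (hK'_nonneg : ∀ x, 0 ≤ x → 0 ≤ K' x)
    (hK0 : 0 ≤ K 0) (hu : Differentiable ℝ u) (huK : Integrable (fun x => u x ^ 2 * K x))
    (hu'uK : Integrable (fun x => deriv u x * u x * K x)) :
    Integrable (fun x => u x ^ 2 * |K' x|) ∧
      ∫ x, u x ^ 2 * |K' x| ≤ 2 * ∫ x, |deriv u x * u x * K x| := by
  set w := fun x => 2 * (deriv u x * u x * K x)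
  set f := fun x => u x ^ 2 * K' x
  have hF : ∀ x, HasDerivAt (fun x => u x ^ 2 * K x) (w x + f x) x := fun x =>
    (((hu x).hasDerivAt.pow 2).mul (hK x)).congr_deriv (by simp only [w, f, Pi.pow_apply]; ring)
  have hf : Continuous f := (hu.continuous.pow 2).mul hK'
  have hw : Integrable w := hu'uK.const_mul 2
  obtain ⟨hfr, hr⟩ := integrableOn_Ioi_and_integral_le_integral_abs_of_hasDerivAt_add
    (fun x _ => hF x) (mul_nonneg (sq_nonneg _) hK0) huK.integrableOn hw.integrableOn
    hf.continuousOn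
    fun x hx => mul_nonneg (sq_nonneg _) (hK'_nonneg x (le_of_lt hx))
  obtain ⟨hfl, hl⟩ := integrableOn_Iic_and_neg_integral_le_integral_abs_of_hasDerivAt_add
    (fun x _ => hF x) (mul_nonneg (sq_nonneg _) hK0) huK.integrableOn hw.integrableOn
    hf.continuousOn
    fun x hx => mul_nonpos_of_nonneg_of_nonpos (sq_nonneg _) (hK'_nonpos x (le_of_lt hx))
  have hleft : EqOn (fun x => u x ^ 2 * |K' x|) (fun x => -f x) (Iic 0) := fun x hx => by
    simp only [f, abs_of_nonpos (hK'_nonpos x hx), mul_neg]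
  have hright : EqOn (fun x => u x ^ 2 * |K' x|) f (Ioi 0) := fun x hx => by
    simp only [f, abs_of_nonneg (hK'_nonneg x (le_of_lt hx))]
  have hg : Integrable (fun x => u x ^ 2 * |K' x|) := by
    rw [← integrableOn_univ, ← Iic_union_Ioi (a := 0)]
    exact (hfl.neg.congr_fun hleft.symm measurableSet_Iic).union
      (hfr.congr_fun hright.symm measurableSet_Ioi)
  refine ⟨hg, ?_⟩
  calc ∫ x, u x ^ 2 * |K' x|
      = (∫ x in Iic 0, u x ^ 2 * |K' x|) + ∫ x in Ioi 0, u x ^ 2 * |K' x| := by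
        rw [← compl_Iic, integral_add_compl measurableSet_Iic hg]
    _ = -(∫ x in Iic 0, f x) + ∫ x in Ioi 0, f x := by
        rw [setIntegral_congr_fun measurableSet_Iic hleft,
          setIntegral_congr_fun measurableSet_Ioi hright, integral_neg]
    _ ≤ (∫ x in Iic 0, |w x|) + ∫ x in Ioi 0, |w x| := add_le_add hl hr
    _ = 2 * ∫ x, |deriv u x * u x * K x| := by
        rw [← compl_Iic, integral_add_compl measurableSet_Iic hw.abs, ← integral_const_mul]
        simp only [w, abs_mul, abs_two]

theorem abs_integral_pow_three_mul_le {α : Type*} [MeasurableSpace α] {μ : Measure α}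
    {u g : α → ℝ} {m : ℝ} (hm : ∀ x, |u x| ≤ m)
    (hg : Integrable (fun x => u x ^ 2 * |g x|) μ) :
    |∫ x, u x ^ 3 * g x ∂μ| ≤ m * ∫ x, u x ^ 2 * |g x| ∂μ := by
  rw [← integral_const_mul]
  refine (abs_integral_le_integral_abs).trans
    (integral_mono_of_nonneg (ae_of_all _ fun x => abs_nonneg _) (hg.const_mul m)
      (ae_of_all _ fun x => ?_))
  calc |u x ^ 3 * g x| = |u x| * (u x ^ 2 * |g x|) := by
        rw [abs_mul, abs_pow, ← sq_abs (u x)]; ring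
    _ ≤ m * (u x ^ 2 * |g x|) := by gcongr; exact hm x

theorem hasDerivAt_exp_sq_div (ν x : ℝ) :
    HasDerivAt (fun ξ => exp (ξ ^ 2 / (4 * ν))) (x / (2 * ν) * exp (x ^ 2 / (4 * ν))) x := by
  convert ((hasDerivAt_pow 2 x).div_const (4 * ν)).exp using 1
  ring

/-- Estimate on the cubic convection term: for `K ξ = exp (ξ²/(4ν))`, so
`K' ξ = (ξ/(2ν)) K ξ`, there is `C > 0` depending only on `ν` with
`|∫ u³ K'| ≤ C ‖u'‖_{L²(K)} ‖u‖_{L²(K)} ‖u‖_{L^∞}`. -/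
theorem stmt10 (ν : ℝ) (hν : 0 < ν)
    (K : ℝ → ℝ) (hK : ∀ ξ, K ξ = Real.exp (ξ ^ 2 / (4 * ν))) :
    ∃ C > (0 : ℝ), ∀ (u : ℝ → ℝ) (m : ℝ), Differentiable ℝ u →
      Integrable (fun ξ => u ξ ^ 2 * K ξ) →
      Integrable (fun ξ => (deriv u ξ) ^ 2 * K ξ) →
      (∀ ξ, |u ξ| ≤ m) →
      |∫ ξ, u ξ ^ 3 * ((ξ / (2 * ν)) * K ξ)|
        ≤ C * Real.sqrt (∫ ξ, (deriv u ξ) ^ 2 * K ξ)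
            * Real.sqrt (∫ ξ, u ξ ^ 2 * K ξ) * m := by
  obtain rfl : K = fun ξ => exp (ξ ^ 2 / (4 * ν)) := funext hK
  refine ⟨2, two_pos, fun u m hu huK hu'K hm => ?_⟩
  have hm0 : 0 ≤ m := (abs_nonneg _).trans (hm 0)
  have hKm : AEStronglyMeasurable (fun ξ => exp (ξ ^ 2 / (4 * ν))) volume := by fun_prop
  obtain ⟨hu'uK, hCS⟩ := integrable_mul_mul_and_integral_abs_le_sqrt_mul_sqrt
    (measurable_deriv u).aestronglyMeasurable hu.continuous.aestronglyMeasurable hKm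
    (fun ξ => (exp_pos _).le) hu'K huK
  obtain ⟨hg, hHardy⟩ := integrable_and_integral_sq_mul_abs_deriv_le (hasDerivAt_exp_sq_div ν)
    (by fun_prop)
    (fun ξ hξ => mul_nonpos_of_nonpos_of_nonneg
      (div_nonpos_of_nonpos_of_nonneg hξ (by positivity)) (exp_pos _).le)
    (fun ξ hξ => by positivity) (exp_pos _).le hu huK hu'uK
  calc |∫ ξ, u ξ ^ 3 * ((ξ / (2 * ν)) * exp (ξ ^ 2 / (4 * ν)))|
      ≤ m * ∫ ξ, u ξ ^ 2 * |ξ / (2 * ν) * exp (ξ ^ 2 / (4 * ν))| :=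
        abs_integral_pow_three_mul_le hm hg
    _ ≤ m * (2 * ∫ ξ, |deriv u ξ * u ξ * exp (ξ ^ 2 / (4 * ν))|) := by gcongr
    _ ≤ m * (2 * (√(∫ ξ, deriv u ξ ^ 2 * exp (ξ ^ 2 / (4 * ν))) *
          √(∫ ξ, u ξ ^ 2 * exp (ξ ^ 2 / (4 * ν))))) := by gcongr
    _ = _ := by ring
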